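/- Let z_1,…,z_r ∈ ℤ^d be generating vectors and n_1,…,n_r ≥ 1 integer moduli, with n = n_1⋯n_r, and let A ⊂ ℤ^d be an anti-aliasing set with |A| = n. Then for all multi-indices k, k' ∈ ℤ_{n_1}×⋯×ℤ_{n_r}: (1/n) · Σ_{h ∈ A} exp(2πi · h·(p_k − p_{k'})) equals 1 if k = k' and equals 0 otherwise, where p_k = Σ_{j=1}^{r} (k_j/n_j) z_j. -/

import Mathlib

noncomputable section

/-- Integer dot product on `ℤ^d`. -/
def dotZ {d : ℕ} (h z : Fin d → ℤ) : ℤ := ∑ i, h i * z i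

/-- Membership in the dual lattice `Λ^⊥`. -/
def InDual {d r : ℕ} (z : Fin r → Fin d → ℤ) (n : Fin r → ℕ) (h : Fin d → ℤ) : Prop :=
  ∀ j, (n j : ℤ) ∣ dotZ h (z j)

/-- The lattice point `p_k = Σ_j (k_j/n_j) z_j ∈ ℝ^d`. -/
def latPt {d r : ℕ} (z : Fin r → Fin d → ℤ) (n : Fin r → ℕ)
    (k : (j : Fin r) → Fin (n j)) : Fin d → ℝ :=
  fun i => ∑ j, ((k j : ℝ) / (n j : ℝ)) * (z j i : ℝ)

/-- The exponential `x ↦ exp(2πi h·x)`. -/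
def eFun {d : ℕ} (h : Fin d → ℤ) (x : Fin d → ℝ) : ℂ :=
  Complex.exp (2 * Real.pi * Complex.I * ∑ i, (h i : ℂ) * (x i : ℂ))

/-!
The map `h ↦ (h·z_j mod n_j)_j` is an additive homomorphism `ℤ^d → ∏_j ℤ/n_j` whose kernel is
`Λ^⊥`, so it is injective on an anti-aliasing set `A`; when `|A| = n` it is a bijection from `A`
onto the finite group `∏_j ℤ/n_j`. The summand `exp(2πi h·(p_k − p_{k'}))` depends only on this
image: it is the character `m ↦ ∏_j e(m_j (k_j − k'_j) / n_j)`. Summing a character over a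
finite group gives the group order if it is trivial, i.e. if `k = k'`, and `0` otherwise.
-/

open Complex Finset ZMod

lemma ZMod.natCast_sub_natCast_eq_zero_iff {N : ℕ} (a b : Fin N) :
    ((a : ℕ) : ZMod N) - (b : ℕ) = 0 ↔ a = b := by
  rw [sub_eq_zero, ZMod.natCast_eq_natCast_iff', Nat.mod_eq_of_lt a.isLt, Nat.mod_eq_of_lt b.isLt,
    Fin.val_inj]

lemma ZMod.sum_prod_stdAddChar_mul {ι : Type*} [Fintype ι] [DecidableEq ι] (N : ι → ℕ)
    [∀ i, NeZero (N i)] (c : ∀ i, ZMod (N i)) :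
    ∑ m : ∀ i, ZMod (N i), ∏ i, stdAddChar (m i * c i) = if c = 0 then ∏ i, (N i : ℂ) else 0 := by
  rw [← Fintype.prod_sum (fun i (a : ZMod (N i)) => stdAddChar (a * c i))]
  simp only [AddChar.sum_mulShift _ (isPrimitive_stdAddChar _), ZMod.card, Nat.cast_ite,
    Nat.cast_zero, Fintype.prod_ite_zero, funext_iff, Pi.zero_apply]

lemma Finset.sum_comp_eq_sum_univ_of_injOn {α β M : Type*} [Fintype β] [DecidableEq β]
    [AddCommMonoid M] {s : Finset α} {g : α → β} (hg : Set.InjOn g s)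
    (hcard : s.card = Fintype.card β) (f : β → M) :
    ∑ a ∈ s, f (g a) = ∑ b, f b := by
  rw [← sum_image hg, eq_univ_of_card _ ((card_image_of_injOn hg).trans hcard)]

section

variable {d r : ℕ} (z : Fin r → Fin d → ℤ) (n : Fin r → ℕ)

def dualResidues : (Fin d → ℤ) →+ ∀ j, ZMod (n j) where
  toFun h j := (dotZ h (z j) : ZMod (n j))
  map_zero' := by ext j; simp [dotZ]
  map_add' a b := by ext j; simp [dotZ, add_mul, sum_add_distrib]

lemma dualResidues_apply (h : Fin d → ℤ) (j : Fin r) :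
    dualResidues z n h j = (dotZ h (z j) : ZMod (n j)) := rfl

lemma dualResidues_eq_zero_iff (h : Fin d → ℤ) : dualResidues z n h = 0 ↔ InDual z n h := by
  simp only [funext_iff, dualResidues_apply, Pi.zero_apply, ZMod.intCast_zmod_eq_zero_iff_dvd,
    InDual]

lemma injOn_dualResidues {A : Set (Fin d → ℤ)}
    (hA : ∀ h ∈ A, ∀ h' ∈ A, h ≠ h' → ¬ InDual z n (h - h')) :
    Set.InjOn (dualResidues z n) A := by
  intro a ha b hb hab
  by_contra hne
  exact hA a ha b hb hne ((dualResidues_eq_zero_iff z n _).1 (by rw [map_sub, hab, sub_self]))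

lemma eFun_latPt_sub [∀ j, NeZero (n j)] (h : Fin d → ℤ) (k k' : (j : Fin r) → Fin (n j)) :
    eFun h (latPt z n k - latPt z n k') = ∏ j, stdAddChar
      (dualResidues z n h j * (((k j : ℕ) : ZMod (n j)) - ((k' j : ℕ) : ZMod (n j)))) := by
  have hfactor : ∀ j,
      dualResidues z n h j * (((k j : ℕ) : ZMod (n j)) - ((k' j : ℕ) : ZMod (n j)))
        = ((dotZ h (z j) * ((k j : ℤ) - k' j) : ℤ) : ZMod (n j)) := fun j => by
    push_cast [dualResidues_apply]; rfl
  simp only [hfactor, stdAddChar_coe, ← Complex.exp_sum, eFun]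
  congr 1
  simp only [latPt, dotZ, Pi.sub_apply]
  push_cast
  simp only [mul_sum, sum_mul, sum_div, ← sum_sub_distrib]
  rw [sum_comm]
  refine sum_congr rfl fun j _ => sum_congr rfl fun i _ => ?_
  ring

end

theorem dual_character_property
    (d r : ℕ)
    (z : Fin r → Fin d → ℤ) (n : Fin r → ℕ) (hn : ∀ j, 1 ≤ n j)
    (A : Finset (Fin d → ℤ))
    (hA : ∀ h ∈ A, ∀ h' ∈ A, h ≠ h' → ¬ InDual z n (h - h'))
    (hcard : A.card = ∏ j, n j)
    (k k' : (j : Fin r) → Fin (n j)) :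
    (1 / (∏ j, (n j : ℂ))) * ∑ h ∈ A, eFun h (latPt z n k - latPt z n k')
    = if k = k' then 1 else 0 := by
  have : ∀ j, NeZero (n j) := fun j => NeZero.of_pos (hn j)
  have hprod : (∏ j, (n j : ℂ)) ≠ 0 := prod_ne_zero_iff.2 fun j _ => NeZero.ne _
  have hcard' : A.card = Fintype.card (∀ j, ZMod (n j)) := by
    simp [hcard, Fintype.card_pi, ZMod.card]
  have hkk : (fun j => ((k j : ℕ) : ZMod (n j)) - ((k' j : ℕ) : ZMod (n j))) = 0 ↔ k = k' := by
    simp only [funext_iff, Pi.zero_apply, natCast_sub_natCast_eq_zero_iff]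
  simp only [eFun_latPt_sub z n _ k k']
  rw [sum_comp_eq_sum_univ_of_injOn (injOn_dualResidues z n hA) hcard'
    (fun m => ∏ j, stdAddChar (m j * (((k j : ℕ) : ZMod (n j)) - ((k' j : ℕ) : ZMod (n j))))),
    sum_prod_stdAddChar_mul]
  simp only [hkk]
  split_ifs
  · field_simp
  · rw [mul_zero]

end
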